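/- The Hamiltonian H^ε(q,p,Q,P) := p²/2 + V(q) + (ε/4)(tr(P^*P) + tr(Q Q^* D²V(q))) is conserved along solutions of the system q̇ = p, ṗ = −∂_q(V(q) + ε V^{(1)}(q,Q)), Q̇ = P, Ṗ = −D²V(q)Q, where V^{(1)}(q,Q) = ¼ tr(Q Q^* D²V(q)). -/

import Mathlib

open scoped Matrix BigOperators

noncomputable section

/-- The Hessian `D²V(q)_{ij}`. -/
def D2V {d : ℕ} (V : EuclideanSpace ℝ (Fin d) → ℝ) (q : EuclideanSpace ℝ (Fin d))
    (i j : Fin d) : ℝ :=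
  iteratedFDeriv ℝ 2 V q ![EuclideanSpace.single i 1, EuclideanSpace.single j 1]

/-- The third derivative tensor `D³V(q)_{ijk}`. -/
def D3V {d : ℕ} (V : EuclideanSpace ℝ (Fin d) → ℝ) (q : EuclideanSpace ℝ (Fin d))
    (i j k : Fin d) : ℝ :=
  iteratedFDeriv ℝ 3 V q
    ![EuclideanSpace.single i 1, EuclideanSpace.single j 1, EuclideanSpace.single k 1]

/-- The correction potential `V⁽¹⁾(q,Q) = ¼ tr(Q Q^* D²V(q))`. -/
def V1 {d : ℕ} (V : EuclideanSpace ℝ (Fin d) → ℝ) (q : EuclideanSpace ℝ (Fin d))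
    (Q : Matrix (Fin d) (Fin d) ℂ) : ℂ :=
  (1/4 : ℂ) * Matrix.trace (Q * Qᴴ * Matrix.of (fun i j => (D2V V q i j : ℂ)))

/-- The complexified Hessian matrix `D²V(q)`. -/
def D2Vc {d : ℕ} (V : EuclideanSpace ℝ (Fin d) → ℝ) (q : EuclideanSpace ℝ (Fin d)) :
    Matrix (Fin d) (Fin d) ℂ :=
  Matrix.of fun i j => (D2V V q i j : ℂ)

/-- The semiclassical Hamiltonian
`H^ε(q,p,Q,P) = p²/2 + V(q) + (ε/4)(tr(P^*P) + tr(Q Q^* D²V(q)))`. -/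
def Heps (ε : ℝ) {d : ℕ} (V : EuclideanSpace ℝ (Fin d) → ℝ)
    (q p : EuclideanSpace ℝ (Fin d)) (Q P : Matrix (Fin d) (Fin d) ℂ) : ℝ :=
  (∑ i, p i ^ 2) / 2 + V q
    + (ε / 4) * ((Matrix.trace (Pᴴ * P)).re + (Matrix.trace (Q * Qᴴ * D2Vc V q)).re)

/-!
Differentiate `H^ε` along a solution. The kinetic term contributes
`-∂_q(V + ε V⁽¹⁾)(q)·p`; the term `V(q)` gives back `∂_q V(q)·p`, and moving `q` inside
`(ε/4) tr(Q Q^* D²V(q))` gives back `ε ∂_q V⁽¹⁾(q)·p`. What remains is the derivative of the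
matrix oscillator energy `tr(P^*P) + tr(Q Q^* D)` at frozen `D = D²V(q)`, which vanishes by
cyclicity of the trace because the Hessian is symmetric.
-/

open Matrix

namespace Matrix

variable {m n l 𝕜 : Type*}

def HasEntrywiseDerivAt [NormedAddCommGroup 𝕜] [NormedSpace ℝ 𝕜]
    (A : ℝ → Matrix m n 𝕜) (A' : Matrix m n 𝕜) (t : ℝ) : Prop :=
  ∀ i j, HasDerivAt (fun s => A s i j) (A' i j) t

namespace HasEntrywiseDerivAt

variable {A : ℝ → Matrix m n 𝕜} {B : ℝ → Matrix n l 𝕜} {A' : Matrix m n 𝕜} {B' : Matrix n l 𝕜}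
  {t : ℝ}

theorem mul [NormedRing 𝕜] [NormedAlgebra ℝ 𝕜] [Fintype n]
    (hA : HasEntrywiseDerivAt A A' t) (hB : HasEntrywiseDerivAt B B' t) :
    HasEntrywiseDerivAt (fun s => A s * B s) (A' * B t + A t * B') t := fun i k => by
  simpa only [mul_apply, add_apply, ← Finset.sum_add_distrib] using
    HasDerivAt.fun_sum fun j _ => (hA i j).fun_mul (hB j k)

theorem conjTranspose [RCLike 𝕜] (hA : HasEntrywiseDerivAt A A' t) :
    HasEntrywiseDerivAt (fun s => (A s)ᴴ) A'ᴴ t := fun i j => by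
  simpa only [conjTranspose_apply] using (hA j i).star

theorem trace [NormedAddCommGroup 𝕜] [NormedSpace ℝ 𝕜] [Fintype m] {A : ℝ → Matrix m m 𝕜}
    {A' : Matrix m m 𝕜} (hA : HasEntrywiseDerivAt A A' t) :
    HasDerivAt (fun s => (A s).trace) A'.trace t :=
  HasDerivAt.fun_sum fun i _ => hA i i

end HasEntrywiseDerivAt

/-- Along `Q̇ = P`, `Ṗ = -D Q` with `D` frozen, the derivatives of `tr(P^*P)` and `tr(Q Q^* D)`
cancel. -/
theorem IsHermitian.trace_conjTranspose_neg_mul_add {n 𝕜 : Type*} [Fintype n] [RCLike 𝕜]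
    {D : Matrix n n 𝕜} (hD : D.IsHermitian) (Q P : Matrix n n 𝕜) :
    trace ((-(D * Q))ᴴ * P + Pᴴ * -(D * Q)) = -trace ((P * Qᴴ + Q * Pᴴ) * D) := by
  simp only [conjTranspose_neg, conjTranspose_mul, hD.eq, Matrix.neg_mul, Matrix.mul_neg,
    Matrix.add_mul, trace_add, trace_neg, neg_add]
  rw [← Matrix.mul_assoc Pᴴ, trace_mul_cycle Pᴴ, trace_mul_cycle Qᴴ]

theorem re_trace_mul_of_ofReal {n : Type*} [Fintype n] (C : Matrix n n ℂ) (M : n → n → ℝ) :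
    (trace (C * of fun i j => (M i j : ℂ))).re = ∑ i, ∑ j, (C j i).re * M i j := by
  simp only [Matrix.trace, diag, mul_apply, of_apply, Complex.re_sum, Complex.re_mul_ofReal]
  exact Finset.sum_comm

end Matrix

theorem HasDerivAt.complex_re {f : ℝ → ℂ} {f' : ℂ} {t : ℝ} (h : HasDerivAt f f' t) :
    HasDerivAt (fun s => (f s).re) f'.re t :=
  Complex.reCLM.hasFDerivAt.comp_hasDerivAt t h

theorem PiLp.hasDerivAt_of_forall_apply {ι : Type*} [Fintype ι] {p : ENNReal} [Fact (1 ≤ p)]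
    {f : ℝ → PiLp p (fun _ : ι => ℝ)} {f' : PiLp p (fun _ : ι => ℝ)} {t : ℝ}
    (h : ∀ i, HasDerivAt (fun s => f s i) (f' i) t) : HasDerivAt f f' t :=
  (PiLp.continuousLinearEquiv p ℝ (fun _ : ι => ℝ)).symm.hasFDerivAt.comp_hasDerivAt
    (f := fun s i => f s i) t (hasDerivAt_pi.mpr h)

theorem EuclideanSpace.sum_mul_apply_single {ι : Type*} [Fintype ι] [DecidableEq ι]
    (L : EuclideanSpace ℝ ι →L[ℝ] ℝ) (v : EuclideanSpace ℝ ι) :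
    ∑ i, v i * L (EuclideanSpace.single i 1) = L v := by
  conv_rhs => rw [← (EuclideanSpace.basisFun ι ℝ).sum_repr v]
  simp [map_sum]

theorem hasDerivAt_sum_sq_div_two {ι : Type*} [Fintype ι] {p : ℝ → ι → ℝ} {p' : ι → ℝ} {t : ℝ}
    (h : ∀ i, HasDerivAt (fun s => p s i) (p' i) t) :
    HasDerivAt (fun s => (∑ i, p s i ^ 2) / 2) (∑ i, p t i * p' i) t := by
  refine ((HasDerivAt.fun_sum fun i _ => (h i).fun_pow 2).div_const 2).congr_deriv ?_
  rw [Finset.sum_div]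
  refine Finset.sum_congr rfl fun i _ => ?_
  push_cast
  ring

section Hessian

variable {d : ℕ} {V : EuclideanSpace ℝ (Fin d) → ℝ}

theorem D2V_comm (hV : ContDiff ℝ 2 V) (x : EuclideanSpace ℝ (Fin d)) (i j : Fin d) :
    D2V V x i j = D2V V x j i := by
  simp only [D2V, iteratedFDeriv_two_apply]
  exact hV.contDiffAt.isSymmSndFDerivAt (by simp) _ _

theorem D2Vc_isHermitian (hV : ContDiff ℝ 2 V) (x : EuclideanSpace ℝ (Fin d)) :
    (D2Vc V x).IsHermitian := by
  ext i j
  simp [D2Vc, D2V_comm hV x i j]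

theorem differentiable_D2V (hV : ContDiff ℝ 3 V) (i j : Fin d) :
    Differentiable ℝ fun x => D2V V x i j := by
  have h : ContDiff ℝ 1 (iteratedFDeriv ℝ 2 V) := hV.iteratedFDeriv_right (by norm_num)
  exact ((ContinuousMultilinearMap.apply ℝ _ ℝ
      ![EuclideanSpace.single i 1, EuclideanSpace.single j 1]).contDiff.comp h).differentiable
    one_ne_zero

variable (V) in
def fderivD2Vc (x v : EuclideanSpace ℝ (Fin d)) : Matrix (Fin d) (Fin d) ℂ :=
  of fun i j => (fderiv ℝ (fun y => D2V V y i j) x v : ℂ)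

theorem hasEntrywiseDerivAt_D2Vc_comp (hV : ContDiff ℝ 3 V) {x : ℝ → EuclideanSpace ℝ (Fin d)}
    {v : EuclideanSpace ℝ (Fin d)} {t : ℝ} (hx : HasDerivAt x v t) :
    HasEntrywiseDerivAt (fun s => D2Vc V (x s)) (fderivD2Vc V (x t) v) t := fun i j =>
  ((differentiable_D2V hV i j (x t)).hasFDerivAt.comp_hasDerivAt t hx).ofReal_comp

theorem hasFDerivAt_re_trace_mul_D2Vc (hV : ContDiff ℝ 3 V) (C : Matrix (Fin d) (Fin d) ℂ)
    (x : EuclideanSpace ℝ (Fin d)) :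
    HasFDerivAt (fun y => (trace (C * D2Vc V y)).re)
      (∑ i, ∑ j, (C j i).re • fderiv ℝ (fun y => D2V V y i j) x) x := by
  simp only [D2Vc, re_trace_mul_of_ofReal]
  exact HasFDerivAt.fun_sum fun i _ => HasFDerivAt.fun_sum fun j _ =>
    (differentiable_D2V hV i j x).hasFDerivAt.const_mul _

theorem re_V1 (Q : Matrix (Fin d) (Fin d) ℂ) (x : EuclideanSpace ℝ (Fin d)) :
    (V1 V x Q).re = (trace (Q * Qᴴ * D2Vc V x)).re / 4 := by
  simp [V1, D2Vc, div_eq_inv_mul]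

theorem fderiv_add_mul_re_V1_apply (hV : ContDiff ℝ 3 V) (ε : ℝ) (Q : Matrix (Fin d) (Fin d) ℂ)
    (x v : EuclideanSpace ℝ (Fin d)) :
    fderiv ℝ (fun y => V y + ε * (V1 V y Q).re) x v
      = fderiv ℝ V x v + ε * ((trace (Q * Qᴴ * fderivD2Vc V x v)).re / 4) := by
  simp only [re_V1, div_eq_inv_mul]
  rw [((hV.differentiable (by norm_num) x).hasFDerivAt.fun_add
    (((hasFDerivAt_re_trace_mul_D2Vc hV (Q * Qᴴ) x).const_mul 4⁻¹).const_mul ε)).fderiv]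
  simp [fderivD2Vc, re_trace_mul_of_ofReal]

end Hessian

theorem Heps_conserved_general (d : ℕ) (ε : ℝ)
    (V : EuclideanSpace ℝ (Fin d) → ℝ) (hV : ContDiff ℝ 3 V)
    (q p : ℝ → EuclideanSpace ℝ (Fin d)) (Q P : ℝ → Matrix (Fin d) (Fin d) ℂ)
    (hq : ∀ t (i : Fin d), HasDerivAt (fun s => q s i) (p t i) t)
    (hp : ∀ t (i : Fin d), HasDerivAt (fun s => p s i)
      (-(fderiv ℝ (fun q' => V q' + ε * (V1 V q' (Q t)).re) (q t)
          (EuclideanSpace.single i 1))) t)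
    (hQ : ∀ t (a b : Fin d), HasDerivAt (fun s => Q s a b) (P t a b) t)
    (hP : ∀ t (a b : Fin d), HasDerivAt (fun s => P s a b)
      ((-(D2Vc V (q t) * Q t)) a b) t) :
    ∀ t : ℝ, Heps ε V (q t) (p t) (Q t) (P t) = Heps ε V (q 0) (p 0) (Q 0) (P 0) := by
  have hH : ∀ t, HasDerivAt (fun s => Heps ε V (q s) (p s) (Q s) (P s)) 0 t := by
    intro t
    have hqt : HasDerivAt q (p t) t := PiLp.hasDerivAt_of_forall_apply (hq t)
    have hQt : HasEntrywiseDerivAt Q (P t) t := hQ t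
    have hPt : HasEntrywiseDerivAt P (-(D2Vc V (q t) * Q t)) t := hP t
    have hkin := hasDerivAt_sum_sq_div_two (hp t)
    have hpot : HasDerivAt (fun s => V (q s)) (fderiv ℝ V (q t) (p t)) t :=
      (hV.differentiable (by norm_num) (q t)).hasFDerivAt.comp_hasDerivAt t hqt
    have hPP := (hPt.conjTranspose.mul hPt).trace.complex_re
    have hQQD :=
      ((hQt.mul hQt.conjTranspose).mul (hasEntrywiseDerivAt_D2Vc_comp hV hqt)).trace.complex_re
    refine ((hkin.add hpot).add ((hPP.add hQQD).const_mul (ε / 4))).congr_deriv ?_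
    rw [(D2Vc_isHermitian hV.of_succ (q t)).trace_conjTranspose_neg_mul_add]
    simp only [mul_neg, Finset.sum_neg_distrib]
    rw [EuclideanSpace.sum_mul_apply_single, fderiv_add_mul_re_V1_apply hV]
    simp only [trace_add, Complex.add_re, Complex.neg_re]
    ring
  exact fun t => is_const_of_deriv_eq_zero (fun s => (hH s).differentiableAt)
    (fun s => (hH s).deriv) t 0

/-- the Hamiltonian `H^ε` is conserved along solutions of the corrected
symplectic Gaussian wave packet equations. -/
theorem Heps_conserved (d : ℕ) (ε : ℝ) (hε : 0 < ε)
    (V : EuclideanSpace ℝ (Fin d) → ℝ) (hV : ContDiff ℝ 3 V)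
    (q p : ℝ → EuclideanSpace ℝ (Fin d)) (Q P : ℝ → Matrix (Fin d) (Fin d) ℂ)
    (hq : ∀ t (i : Fin d), HasDerivAt (fun s => q s i) (p t i) t)
    (hp : ∀ t (i : Fin d), HasDerivAt (fun s => p s i)
      (-(fderiv ℝ (fun q' => V q' + ε * (V1 V q' (Q t)).re) (q t)
          (EuclideanSpace.single i 1))) t)
    (hQ : ∀ t (a b : Fin d), HasDerivAt (fun s => Q s a b) (P t a b) t)
    (hP : ∀ t (a b : Fin d), HasDerivAt (fun s => P s a b)
      ((-(D2Vc V (q t) * Q t)) a b) t) :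
    ∀ t : ℝ, Heps ε V (q t) (p t) (Q t) (P t) = Heps ε V (q 0) (p 0) (Q 0) (P 0) :=
  Heps_conserved_general d ε V hV q p Q P hq hp hQ hP

end
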